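/- Let d ≥ 1 and i ≥ 0 be natural numbers. Suppose s, b : ℕ → ℕ track the sizes of signal buffer S_{i+1} and bucket B_{i+1} between consecutive executions of Resolve(i+1), i.e., s 0 = 0 and b 0 = d·2^(2(i+1)+1), and each execution of Resolve(i) adds at most d·2^(2i) elements to S_{i+1} and removes at most d·2^(2i) elements from B_{i+1}: for all t, s (t+1) ≤ s t + d·2^(2i) and b t ≤ b (t+1) + d·2^(2i). Then after at most 3 executions of Resolve(i), the preconditions of Resolve(i) concerning level i+1 remain satisfied: for all t ≤ 3, s t ≤ d·2^(2(i+1)) − d·2^(2i) and b t ≥ d·2^(2(i+1)) + d·2^(2i). -/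

import Mathlib

/-!
Each execution of `Resolve(i)` changes `|S_{i+1}|` and `|B_{i+1}|` by at most `X = d·4^i`,
while the thresholds `4X - X` and `4X + X` sit `3X` away from the initial sizes `0` and `8X`.
-/

section Drift

variable {α : Type*} [AddCommMonoid α] [PartialOrder α] [IsOrderedAddMonoid α]

theorem le_add_nsmul_of_forall_succ_le_add {f : ℕ → α} {c : α} (hf : ∀ t, f (t + 1) ≤ f t + c) :
    ∀ t, f t ≤ f 0 + t • c
  | 0 => by simp
  | t + 1 => calc
      f (t + 1) ≤ f t + c := hf t
      _ ≤ f 0 + t • c + c := add_le_add_left (le_add_nsmul_of_forall_succ_le_add hf t) c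
      _ = f 0 + (t + 1) • c := by rw [succ_nsmul, add_assoc]

theorem le_add_nsmul_of_forall_le_succ_add {g : ℕ → α} {c : α} (hg : ∀ t, g t ≤ g (t + 1) + c) :
    ∀ t, g 0 ≤ g t + t • c
  | 0 => by simp
  | t + 1 => calc
      g 0 ≤ g t + t • c := le_add_nsmul_of_forall_le_succ_add hg t
      _ ≤ g (t + 1) + c + t • c := add_le_add_left (hg t) _
      _ = g (t + 1) + (t + 1) • c := by rw [succ_nsmul', add_assoc]

end Drift

theorem parBucketHeap_nextLevel_preconditions_general
    (d i : ℕ) (s b : ℕ → ℕ)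
    (hs0 : s 0 = 0) (hb0 : b 0 = d * 2 ^ (2 * (i + 1) + 1))
    (hs : ∀ t, s (t + 1) ≤ s t + d * 2 ^ (2 * i))
    (hb : ∀ t, b t ≤ b (t + 1) + d * 2 ^ (2 * i)) :
    ∀ t ≤ 3, s t ≤ d * 2 ^ (2 * (i + 1)) - d * 2 ^ (2 * i) ∧
      d * 2 ^ (2 * (i + 1)) + d * 2 ^ (2 * i) ≤ b t := by
  intro t ht
  set X := d * 2 ^ (2 * i)
  have h4X : d * 2 ^ (2 * (i + 1)) = 4 * X := by ring
  have h8X : d * 2 ^ (2 * (i + 1) + 1) = 8 * X := by ring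
  have hst : s t ≤ t * X := by simpa [hs0] using le_add_nsmul_of_forall_succ_le_add hs t
  have hbt : 8 * X ≤ b t + t * X := by simpa [hb0, h8X] using le_add_nsmul_of_forall_le_succ_add hb t
  have htX : t * X ≤ 3 * X := Nat.mul_le_mul_right X ht
  rw [h4X]
  omega

/-- Theorem 1, part (ii): sizes of `S_{i+1}` and `B_{i+1}` between consecutive executions of
`Resolve(i+1)` satisfy the preconditions of `Resolve(i)` concerning level `i+1`
for at most 3 executions of `Resolve(i)`. -/
theorem parBucketHeap_nextLevel_preconditions
    (d i : ℕ) (hd : 1 ≤ d) (s b : ℕ → ℕ)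
    (hs0 : s 0 = 0) (hb0 : b 0 = d * 2 ^ (2 * (i + 1) + 1))
    (hs : ∀ t, s (t + 1) ≤ s t + d * 2 ^ (2 * i))
    (hb : ∀ t, b t ≤ b (t + 1) + d * 2 ^ (2 * i)) :
    ∀ t ≤ 3, s t ≤ d * 2 ^ (2 * (i + 1)) - d * 2 ^ (2 * i) ∧
      d * 2 ^ (2 * (i + 1)) + d * 2 ^ (2 * i) ≤ b t :=
  parBucketHeap_nextLevel_preconditions_general d i s b hs0 hb0 hs hb
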